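/- arXiv:2510.00807 — 5 statements merged into one kernel-verified Lean document; each statement's English description precedes it below -/
import Mathlib

section
/- Let (Ω, F, P) be a probability space, let X : Ω → ℝ be a centered Gaussian random variable (its law is the Gaussian measure on ℝ with mean 0 and variance v ≥ 0), let Y : Ω → ℝ be any random variable, and fix θ ∈ ℝ. Then the function F : ℂ → ℂ defined by F(z) = E[exp(i θ (z X + Y))] is well defined (the integrand is integrable for every z ∈ ℂ, since |exp(iθ(zX+Y))| = exp(-θ·Im(z)·X)) and F is an entire function, with derivative F'(z) = E[i θ X exp(i θ (z X + Y))] at every z ∈ ℂ. -/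
/-!
Writing `exp (i θ (w X + Y)) = exp (i θ Y) · exp ((i θ w) X)`, the function is the composition of
`u ↦ E[g · exp (u X)]` with `w ↦ i θ w`, where `g = exp (i θ Y)` has modulus one. A Gaussian `X`
has exponential moments of every order, so `E[g · exp (u X)]` may be differentiated under the
integral sign at every `u₀`: for `u` near `u₀`, `|X exp (u X)|` is dominated by
`|X| (exp (a X) + exp (b X))` for fixed `a < Re u₀ < b`.
-/

open MeasureTheory ProbabilityTheory Complex

lemma Real.exp_mul_le_exp_mul_add_exp_mul {a b t : ℝ} (hat : a ≤ t) (htb : t ≤ b) (x : ℝ) :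
    Real.exp (t * x) ≤ Real.exp (a * x) + Real.exp (b * x) := by
  rcases le_total 0 x with hx | hx
  · calc Real.exp (t * x) ≤ Real.exp (b * x) := Real.exp_le_exp.2 (by nlinarith)
      _ ≤ _ := le_add_of_nonneg_left (Real.exp_nonneg _)
  · calc Real.exp (t * x) ≤ Real.exp (a * x) := Real.exp_le_exp.2 (by nlinarith)
      _ ≤ _ := le_add_of_nonneg_right (Real.exp_nonneg _)

namespace ProbabilityTheory

variable {Ω : Type*} {m : MeasurableSpace Ω} {μ : Measure Ω} {X : Ω → ℝ} {g : Ω → ℂ} {C : ℝ}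

lemma integrableExpSet_eq_univ_of_map_eq_gaussianReal {m₀ : ℝ} {v : NNReal}
    (hX : μ.map X = gaussianReal m₀ v) : integrableExpSet X μ = Set.univ := by
  have hX_meas : AEMeasurable X μ := aemeasurable_of_map_neZero (by rw [hX]; infer_instance)
  refine Set.eq_univ_of_forall fun t => ?_
  have h := integrable_exp_mul_gaussianReal (μ := m₀) (v := v) t
  rw [← hX] at h
  exact (integrable_map_measure (by fun_prop) hX_meas).mp h

lemma integrable_mul_cexp_mul_of_re_mem_integrableExpSet {z : ℂ} (hX : AEMeasurable X μ)
    (hg : AEStronglyMeasurable g μ) (hgC : ∀ᵐ ω ∂μ, ‖g ω‖ ≤ C)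
    (hz : z.re ∈ integrableExpSet X μ) :
    Integrable (fun ω => g ω * cexp (z * X ω)) μ :=
  (integrable_cexp_mul_of_re_mem_integrableExpSet hX hz).bdd_mul hg hgC

lemma hasDerivAt_integral_mul_cexp_mul {z : ℂ} (hg : AEStronglyMeasurable g μ)
    (hgC : ∀ᵐ ω ∂μ, ‖g ω‖ ≤ C) (hz : z.re ∈ interior (integrableExpSet X μ)) :
    HasDerivAt (fun w => ∫ ω, g ω * cexp (w * X ω) ∂μ)
      (∫ ω, g ω * (X ω * cexp (z * X ω)) ∂μ) z := by
  have hX : AEMeasurable X μ := aemeasurable_of_mem_interior_integrableExpSet hz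
  obtain ⟨ε, hε, hball⟩ := Metric.isOpen_iff.mp isOpen_interior z.re hz
  have ha : z.re - ε / 2 ∈ interior (integrableExpSet X μ) :=
    hball (by rw [Metric.mem_ball, Real.dist_eq, abs_of_neg (by linarith)]; linarith)
  have hb : z.re + ε / 2 ∈ interior (integrableExpSet X μ) :=
    hball (by rw [Metric.mem_ball, Real.dist_eq, abs_of_pos (by linarith)]; linarith)
  have hbound_int : Integrable (fun ω => C * (|X ω| * Real.exp ((z.re - ε / 2) * X ω)
      + |X ω| * Real.exp ((z.re + ε / 2) * X ω))) μ := by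
    have := (integrable_pow_abs_mul_exp_of_mem_interior_integrableExpSet ha 1).add
      (integrable_pow_abs_mul_exp_of_mem_interior_integrableExpSet hb 1)
    simp only [pow_one] at this
    exact this.const_mul C
  refine (hasDerivAt_integral_of_dominated_loc_of_deriv_le
    (F := fun w ω => g ω * cexp (w * X ω)) (F' := fun w ω => g ω * (X ω * cexp (w * X ω)))
    (Metric.ball_mem_nhds z (half_pos hε)) (.of_forall fun w => by fun_prop)
    (integrable_mul_cexp_mul_of_re_mem_integrableExpSet hX hg hgC (interior_subset hz))
    (by fun_prop) ?_ hbound_int ?_).2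
  · filter_upwards [hgC] with ω hω w hw
    have hre : |w.re - z.re| < ε / 2 :=
      (abs_re_le_norm (w - z)).trans_lt (by simpa [dist_eq_norm] using hw)
    rw [norm_mul, norm_mul, norm_real, Real.norm_eq_abs, Complex.norm_exp, ← mul_add]
    simp only [mul_re, ofReal_re, ofReal_im, mul_zero, sub_zero]
    refine mul_le_mul hω (mul_le_mul_of_nonneg_left ?_ (abs_nonneg _)) (by positivity)
      ((norm_nonneg _).trans hω)
    exact Real.exp_mul_le_exp_mul_add_exp_mul (by linarith [abs_lt.1 hre])
      (by linarith [abs_lt.1 hre]) _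
  · refine ae_of_all _ fun ω w _ => ?_
    simpa [mul_comm] using ((hasDerivAt_mul_const (X ω : ℂ)).cexp).const_mul (g ω)

end ProbabilityTheory

theorem stmt1_general {Ω : Type*} [MeasurableSpace Ω] (P : Measure Ω)
    (X Y : Ω → ℝ) (hY : Measurable Y)
    (v : NNReal) (hGauss : Measure.map X P = gaussianReal 0 v) (θ : ℝ) :
    (∀ z : ℂ, Integrable (fun ω =>
        Complex.exp (Complex.I * (θ : ℂ) * (z * (X ω : ℂ) + (Y ω : ℂ)))) P) ∧
    (∀ z : ℂ, HasDerivAt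
        (fun w : ℂ => ∫ ω, Complex.exp (Complex.I * (θ : ℂ) * (w * (X ω : ℂ) + (Y ω : ℂ))) ∂P)
        (∫ ω, Complex.I * (θ : ℂ) * (X ω : ℂ) *
          Complex.exp (Complex.I * (θ : ℂ) * (z * (X ω : ℂ) + (Y ω : ℂ))) ∂P) z) := by
  have hX : AEMeasurable X P := aemeasurable_of_map_neZero (by rw [hGauss]; infer_instance)
  have hexp := integrableExpSet_eq_univ_of_map_eq_gaussianReal hGauss
  have hg_meas : AEStronglyMeasurable (fun ω => cexp (I * θ * Y ω)) P := by fun_prop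
  have hg_norm : ∀ᵐ ω ∂P, ‖cexp (I * θ * Y ω)‖ ≤ 1 :=
    ae_of_all _ fun ω => by simp [Complex.norm_exp]
  have hsplit : ∀ w : ℂ, ∀ ω, cexp (I * θ * (w * X ω + Y ω))
      = cexp (I * θ * Y ω) * cexp (I * θ * w * X ω) := fun w ω => by
    rw [← Complex.exp_add]; ring_nf
  simp only [hsplit]
  refine ⟨fun z => ?_, fun z => ?_⟩
  · exact integrable_mul_cexp_mul_of_re_mem_integrableExpSet hX hg_meas hg_norm (by simp [hexp])
  · have hG : HasDerivAt (fun u => ∫ ω, cexp (I * θ * Y ω) * cexp (u * X ω) ∂P)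
        (∫ ω, cexp (I * θ * Y ω) * (X ω * cexp (I * θ * z * X ω)) ∂P) (I * θ * z) :=
      hasDerivAt_integral_mul_cexp_mul hg_meas hg_norm (by simp [hexp])
    have h := hG.comp z ((hasDerivAt_id z).const_mul (I * θ))
    simp only [Function.comp_def, mul_one, ← integral_mul_const] at h
    exact h.congr_deriv (by congr 1; ext ω; ring)

/-- If `X` is a centered Gaussian random variable, `Y` is any random variable and `θ ∈ ℝ`,
then `F z = E[exp(i θ (z X + Y))]` is well defined (the integrand is integrable for every
`z ∈ ℂ`) and `F` is entire, with derivative `F'(z) = E[i θ X exp(i θ (z X + Y))]`. -/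
theorem stmt1 {Ω : Type*} [MeasurableSpace Ω] (P : Measure Ω) [IsProbabilityMeasure P]
    (X Y : Ω → ℝ) (hX : Measurable X) (hY : Measurable Y)
    (v : NNReal) (hGauss : Measure.map X P = gaussianReal 0 v) (θ : ℝ) :
    (∀ z : ℂ, Integrable (fun ω =>
        Complex.exp (Complex.I * (θ : ℂ) * (z * (X ω : ℂ) + (Y ω : ℂ)))) P) ∧
    (∀ z : ℂ, HasDerivAt
        (fun w : ℂ => ∫ ω, Complex.exp (Complex.I * (θ : ℂ) * (w * (X ω : ℂ) + (Y ω : ℂ))) ∂P)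
        (∫ ω, Complex.I * (θ : ℂ) * (X ω : ℂ) *
          Complex.exp (Complex.I * (θ : ℂ) * (z * (X ω : ℂ) + (Y ω : ℂ))) ∂P) z) :=
  stmt1_general P X Y hY v hGauss θ
end

section
/- Let (Ω, F, P) be a probability space and let X, Y : Ω → ℝ be square-integrable random variables with Cov(X, Y) ≥ 0. Assume: (i) (Newman covariance inequality) for every pair of Lipschitz functions f, g : ℝ → ℝ one has |Cov(f(X), g(Y))| ≤ Lip(f)·Lip(g)·Cov(X, Y), where Lip(f) denotes the Lipschitz constant of f; (ii) (anti-concentration) there exist constants α₀, K₀, C₀ > 0 such that P{X ∈ [z, z+δ]} ≤ C₀ δ^{α₀} and P{Y ∈ [z, z+δ]} ≤ C₀ δ^{α₀} for all z ≥ K₀ and all δ > 0. Then for all a, b ≥ K₀, P{X ≤ a and Y ≤ b} − P{X ≤ a}·P{Y ≤ b} ≤ (1 + 4C₀) · Cov(X, Y)^{α₀/(2+α₀)}. -/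
open MeasureTheory ProbabilityTheory

/-- The covariance `Cov(U,V) = E[UV] - E[U]E[V]`. -/
noncomputable def cov {Ω : Type*} [MeasurableSpace Ω] (P : Measure Ω) (U V : Ω → ℝ) : ℝ :=
  (∫ ω, U ω * V ω ∂P) - (∫ ω, U ω ∂P) * (∫ ω, V ω ∂P)

/-- A piecewise-linear approximation of the indicator of `(-∞, a]`. -/
noncomputable def clampFn (a δ : ℝ) : ℝ → ℝ := fun x => max 0 (min 1 ((a + δ - x) / δ))

lemma clampFn_nonneg (a δ x : ℝ) : 0 ≤ clampFn a δ x := le_max_left _ _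

lemma clampFn_le_one (a δ x : ℝ) : clampFn a δ x ≤ 1 :=
  max_le one_pos.le (min_le_left _ _)

lemma clampFn_eq_one {a δ x : ℝ} (hδ : 0 < δ) (hx : x ≤ a) : clampFn a δ x = 1 := by
  have h : (1:ℝ) ≤ (a + δ - x) / δ := by
    rw [le_div_iff₀ hδ]; linarith
  simp [clampFn, min_eq_left h]

lemma clampFn_eq_zero {a δ x : ℝ} (hδ : 0 < δ) (hx : a + δ ≤ x) : clampFn a δ x = 0 := by
  have h : (a + δ - x) / δ ≤ 0 := div_nonpos_of_nonpos_of_nonneg (by linarith) hδ.le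
  have : min 1 ((a + δ - x) / δ) ≤ 0 := le_trans (min_le_right _ _) h
  simp [clampFn, max_eq_left this]

lemma clampFn_lipschitz (a : ℝ) {δ : ℝ} (hδ : 0 < δ) :
    LipschitzWith ⟨δ⁻¹, by positivity⟩ (clampFn a δ) := by
  have hbase : LipschitzWith ⟨δ⁻¹, by positivity⟩ (fun x : ℝ => (a + δ - x) / δ) := by
    apply LipschitzWith.of_dist_le_mul
    intro x y
    rw [Real.dist_eq, Real.dist_eq, div_sub_div_same]
    have : a + δ - x - (a + δ - y) = y - x := by ring
    rw [this, abs_div, abs_of_pos hδ, abs_sub_comm]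
    change |x - y| / δ ≤ δ⁻¹ * |x - y|
    rw [div_eq_inv_mul]
  exact (hbase.const_min 1).const_max 0

lemma clampFn_continuous (a : ℝ) {δ : ℝ} (hδ : 0 < δ) : Continuous (clampFn a δ) :=
  (clampFn_lipschitz a hδ).continuous

/-- The key one-δ estimate. -/
lemma key_est {Ω : Type*} [MeasurableSpace Ω] (P : Measure Ω) [IsProbabilityMeasure P]
    (X Y : Ω → ℝ) (hX : Measurable X) (hY : Measurable Y)
    (C a b δ εa εb : ℝ) (hδ : 0 < δ)
    (hNew : cov P (fun ω => clampFn a δ (X ω)) (fun ω => clampFn b δ (Y ω)) ≤ C / δ ^ 2)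
    (hA : (P {ω | X ω ∈ Set.Icc a (a + δ)}).toReal ≤ εa)
    (hB : (P {ω | Y ω ∈ Set.Icc b (b + δ)}).toReal ≤ εb) :
    (P {ω | X ω ≤ a ∧ Y ω ≤ b}).toReal - (P {ω | X ω ≤ a}).toReal * (P {ω | Y ω ≤ b}).toReal
      ≤ C / δ ^ 2 + εa + εb := by
  set f := clampFn a δ with hf
  set g := clampFn b δ with hg
  have hfc : Continuous f := clampFn_continuous a hδ
  have hgc : Continuous g := clampFn_continuous b hδ
  have intF : Integrable (fun ω => f (X ω)) P := by
    refine ⟨(hfc.measurable.comp hX).aestronglyMeasurable, ?_⟩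
    refine HasFiniteIntegral.of_bounded (C := 1) (ae_of_all _ fun ω => ?_)
    rw [Real.norm_eq_abs, abs_of_nonneg (clampFn_nonneg _ _ _)]
    exact clampFn_le_one _ _ _
  have intG : Integrable (fun ω => g (Y ω)) P := by
    refine ⟨(hgc.measurable.comp hY).aestronglyMeasurable, ?_⟩
    refine HasFiniteIntegral.of_bounded (C := 1) (ae_of_all _ fun ω => ?_)
    rw [Real.norm_eq_abs, abs_of_nonneg (clampFn_nonneg _ _ _)]
    exact clampFn_le_one _ _ _
  have intFG : Integrable (fun ω => f (X ω) * g (Y ω)) P := by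
    refine ⟨((hfc.measurable.comp hX).mul (hgc.measurable.comp hY)).aestronglyMeasurable, ?_⟩
    refine HasFiniteIntegral.of_bounded (C := 1) (ae_of_all _ fun ω => ?_)
    rw [Real.norm_eq_abs, abs_of_nonneg (mul_nonneg (clampFn_nonneg _ _ _) (clampFn_nonneg _ _ _))]
    exact mul_le_one₀ (clampFn_le_one _ _ _) (clampFn_nonneg _ _ _) (clampFn_le_one _ _ _)
  have hS : MeasurableSet {ω | X ω ≤ a ∧ Y ω ≤ b} :=
    (hX measurableSet_Iic).inter (hY measurableSet_Iic)
  -- Step 1: P(S) ≤ E[f(X)g(Y)]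
  have h1 : (P {ω | X ω ≤ a ∧ Y ω ≤ b}).toReal ≤ ∫ ω, f (X ω) * g (Y ω) ∂P := by
    rw [← measureReal_def, ← integral_indicator_one hS]
    refine integral_mono ((integrable_const 1).indicator hS) intFG fun ω => ?_
    by_cases hω : ω ∈ {ω | X ω ≤ a ∧ Y ω ≤ b}
    · rw [Set.indicator_of_mem hω]
      have hx : X ω ≤ a := hω.1
      have hy : Y ω ≤ b := hω.2
      rw [Pi.one_apply, hf, hg, clampFn_eq_one hδ hx, clampFn_eq_one hδ hy, mul_one]
    · rw [Set.indicator_of_notMem hω]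
      exact mul_nonneg (clampFn_nonneg _ _ _) (clampFn_nonneg _ _ _)
  -- Step 2: E[f(X)] ≤ P(X ≤ a) + εa
  have step2 : ∀ (Z : Ω → ℝ) (hZ : Measurable Z) (c ε : ℝ),
      (P {ω | Z ω ∈ Set.Icc c (c + δ)}).toReal ≤ ε →
      ∫ ω, clampFn c δ (Z ω) ∂P ≤ (P {ω | Z ω ≤ c}).toReal + ε := by
    intro Z hZ c ε hε
    have hzc : Continuous (clampFn c δ) := clampFn_continuous c hδ
    have intZ : Integrable (fun ω => clampFn c δ (Z ω)) P := by
      refine ⟨(hzc.measurable.comp hZ).aestronglyMeasurable, ?_⟩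
      refine HasFiniteIntegral.of_bounded (C := 1) (ae_of_all _ fun ω => ?_)
      rw [Real.norm_eq_abs, abs_of_nonneg (clampFn_nonneg _ _ _)]
      exact clampFn_le_one _ _ _
    have hT : MeasurableSet {ω | Z ω ≤ c + δ} := hZ measurableSet_Iic
    have hstep : ∫ ω, clampFn c δ (Z ω) ∂P ≤ (P {ω | Z ω ≤ c + δ}).toReal := by
      rw [← measureReal_def, ← integral_indicator_one hT]
      refine integral_mono intZ ((integrable_const 1).indicator hT) fun ω => ?_
      by_cases hω : ω ∈ {ω | Z ω ≤ c + δ}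
      · rw [Set.indicator_of_mem hω, Pi.one_apply]
        exact clampFn_le_one _ _ _
      · rw [Set.indicator_of_notMem hω, clampFn_eq_zero hδ (le_of_lt (lt_of_not_ge hω))]
    refine hstep.trans ?_
    have hsub : {ω | Z ω ≤ c + δ} ⊆ {ω | Z ω ≤ c} ∪ {ω | Z ω ∈ Set.Icc c (c + δ)} := by
      intro ω hω
      rcases le_or_gt (Z ω) c with h | h
      · exact Or.inl h
      · exact Or.inr ⟨h.le, hω⟩
    calc (P {ω | Z ω ≤ c + δ}).toReal
        ≤ ((P {ω | Z ω ≤ c}) + P {ω | Z ω ∈ Set.Icc c (c + δ)}).toReal := by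
          refine ENNReal.toReal_mono ?_ ((measure_mono hsub).trans (measure_union_le _ _))
          exact ENNReal.add_ne_top.2 ⟨measure_ne_top _ _, measure_ne_top _ _⟩
      _ = (P {ω | Z ω ≤ c}).toReal + (P {ω | Z ω ∈ Set.Icc c (c + δ)}).toReal :=
          ENNReal.toReal_add (measure_ne_top _ _) (measure_ne_top _ _)
      _ ≤ (P {ω | Z ω ≤ c}).toReal + ε := by linarith
  have h2 := step2 X hX a εa hA
  have h3 := step2 Y hY b εb hB
  -- bounds
  have hEf0 : 0 ≤ ∫ ω, f (X ω) ∂P := integral_nonneg fun ω => clampFn_nonneg _ _ _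
  have hEg0 : 0 ≤ ∫ ω, g (Y ω) ∂P := integral_nonneg fun ω => clampFn_nonneg _ _ _
  have hEg1 : ∫ ω, g (Y ω) ∂P ≤ 1 := by
    calc ∫ ω, g (Y ω) ∂P ≤ ∫ _, (1:ℝ) ∂P :=
          integral_mono intG (integrable_const 1) fun ω => clampFn_le_one _ _ _
      _ = 1 := by simp
  have hp0 : (0:ℝ) ≤ (P {ω | X ω ≤ a}).toReal := ENNReal.toReal_nonneg
  have hp1 : (P {ω | X ω ≤ a}).toReal ≤ 1 := by
    have := ENNReal.toReal_mono ENNReal.one_ne_top (prob_le_one (μ := P) (s := {ω | X ω ≤ a}))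
    simpa using this
  have hq0 : (0:ℝ) ≤ (P {ω | Y ω ≤ b}).toReal := ENNReal.toReal_nonneg
  have hεa0 : 0 ≤ εa := le_trans ENNReal.toReal_nonneg hA
  have hεb0 : 0 ≤ εb := le_trans ENNReal.toReal_nonneg hB
  have hcovfg : ∫ ω, f (X ω) * g (Y ω) ∂P
      ≤ C / δ ^ 2 + (∫ ω, f (X ω) ∂P) * ∫ ω, g (Y ω) ∂P := by
    have : cov P (fun ω => f (X ω)) (fun ω => g (Y ω))
        = (∫ ω, f (X ω) * g (Y ω) ∂P) - (∫ ω, f (X ω) ∂P) * ∫ ω, g (Y ω) ∂P := rfl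
    linarith [hNew, this ▸ hNew]
  nlinarith [mul_le_mul_of_nonneg_right h2 hEg0,
    mul_le_mul_of_nonneg_left h3 hp0,
    mul_le_mul_of_nonneg_right hEg1 hεa0]

/-- If `X, Y` are square integrable with `Cov(X,Y) ≥ 0`, satisfy the Newman covariance
inequality for Lipschitz functions and an anti-concentration bound, then the joint CDF
gap is controlled by a power of the covariance. -/
theorem stmt2 {Ω : Type*} [MeasurableSpace Ω] (P : Measure Ω) [IsProbabilityMeasure P]
    (X Y : Ω → ℝ) (hX : MemLp X 2 P) (hY : MemLp Y 2 P)
    (hcov : 0 ≤ cov P X Y)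
    (hNewman : ∀ (f g : ℝ → ℝ) (Lf Lg : NNReal), LipschitzWith Lf f → LipschitzWith Lg g →
      |cov P (fun ω => f (X ω)) (fun ω => g (Y ω))| ≤ (Lf : ℝ) * (Lg : ℝ) * cov P X Y)
    (α₀ K₀ C₀ : ℝ) (hα₀ : 0 < α₀) (hK₀ : 0 < K₀) (hC₀ : 0 < C₀)
    (hantiX : ∀ z ≥ K₀, ∀ δ > 0, (P {ω | X ω ∈ Set.Icc z (z + δ)}).toReal ≤ C₀ * δ ^ α₀)
    (hantiY : ∀ z ≥ K₀, ∀ δ > 0, (P {ω | Y ω ∈ Set.Icc z (z + δ)}).toReal ≤ C₀ * δ ^ α₀) :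
    ∀ a ≥ K₀, ∀ b ≥ K₀,
      (P {ω | X ω ≤ a ∧ Y ω ≤ b}).toReal - (P {ω | X ω ≤ a}).toReal * (P {ω | Y ω ≤ b}).toReal
        ≤ (1 + 4 * C₀) * (cov P X Y) ^ (α₀ / (2 + α₀)) := by
  intro a ha b hb
  -- measurable representatives
  obtain ⟨X', hX'meas, hXX'⟩ := hX.aestronglyMeasurable.aemeasurable
  obtain ⟨Y', hY'meas, hYY'⟩ := hY.aestronglyMeasurable.aemeasurable
  set C : ℝ := cov P X Y with hC
  -- transfer of measures of sets
  have hmeasXY : ∀ (s t : Set ℝ), P {ω | X ω ∈ s ∧ Y ω ∈ t} = P {ω | X' ω ∈ s ∧ Y' ω ∈ t} := by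
    intro s t
    refine measure_congr ?_
    filter_upwards [hXX', hYY'] with ω h1 h2
    change (X ω ∈ s ∧ Y ω ∈ t) = (X' ω ∈ s ∧ Y' ω ∈ t)
    rw [h1, h2]
  have hmeasX : ∀ (s : Set ℝ), P {ω | X ω ∈ s} = P {ω | X' ω ∈ s} := by
    intro s
    refine measure_congr ?_
    filter_upwards [hXX'] with ω h1
    change (X ω ∈ s) = (X' ω ∈ s)
    rw [h1]
  have hmeasY : ∀ (s : Set ℝ), P {ω | Y ω ∈ s} = P {ω | Y' ω ∈ s} := by
    intro s
    refine measure_congr ?_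
    filter_upwards [hYY'] with ω h1
    change (Y ω ∈ s) = (Y' ω ∈ s)
    rw [h1]
  -- the key estimate, for every δ > 0
  have key : ∀ δ > 0,
      (P {ω | X ω ≤ a ∧ Y ω ≤ b}).toReal
        - (P {ω | X ω ≤ a}).toReal * (P {ω | Y ω ≤ b}).toReal
        ≤ C / δ ^ 2 + C₀ * δ ^ α₀ + C₀ * δ ^ α₀ := by
    intro δ hδ
    have hNew0 := hNewman (clampFn a δ) (clampFn b δ) ⟨δ⁻¹, by positivity⟩ ⟨δ⁻¹, by positivity⟩
      (clampFn_lipschitz a hδ) (clampFn_lipschitz b hδ)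
    have hNew1 : cov P (fun ω => clampFn a δ (X' ω)) (fun ω => clampFn b δ (Y' ω))
        ≤ C / δ ^ 2 := by
      have hcongr : cov P (fun ω => clampFn a δ (X' ω)) (fun ω => clampFn b δ (Y' ω))
          = cov P (fun ω => clampFn a δ (X ω)) (fun ω => clampFn b δ (Y ω)) := by
        unfold cov
        have e1 : ∫ ω, clampFn a δ (X' ω) * clampFn b δ (Y' ω) ∂P
            = ∫ ω, clampFn a δ (X ω) * clampFn b δ (Y ω) ∂P := by
          refine integral_congr_ae ?_
          filter_upwards [hXX', hYY'] with ω h1 h2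
          rw [h1, h2]
        have e2 : ∫ ω, clampFn a δ (X' ω) ∂P = ∫ ω, clampFn a δ (X ω) ∂P := by
          refine integral_congr_ae ?_
          filter_upwards [hXX'] with ω h1
          rw [h1]
        have e3 : ∫ ω, clampFn b δ (Y' ω) ∂P = ∫ ω, clampFn b δ (Y ω) ∂P := by
          refine integral_congr_ae ?_
          filter_upwards [hYY'] with ω h1
          rw [h1]
        rw [e1, e2, e3]
      rw [hcongr]
      have habs := (abs_le.1 hNew0).2
      refine habs.trans (le_of_eq ?_)
      show δ⁻¹ * δ⁻¹ * C = C / δ ^ 2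
      rw [div_eq_mul_inv, pow_two, mul_inv]
      ring
    have hA : (P {ω | X' ω ∈ Set.Icc a (a + δ)}).toReal ≤ C₀ * δ ^ α₀ := by
      rw [← hmeasX]; exact hantiX a ha δ hδ
    have hB : (P {ω | Y' ω ∈ Set.Icc b (b + δ)}).toReal ≤ C₀ * δ ^ α₀ := by
      rw [← hmeasY]; exact hantiY b hb δ hδ
    have hmain := key_est P X' Y' hX'meas hY'meas C a b δ _ _ hδ hNew1 hA hB
    have eS : P {ω | X ω ≤ a ∧ Y ω ≤ b} = P {ω | X' ω ≤ a ∧ Y' ω ≤ b} :=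
      hmeasXY (Set.Iic a) (Set.Iic b)
    have eA : P {ω | X ω ≤ a} = P {ω | X' ω ≤ a} := hmeasX (Set.Iic a)
    have eB : P {ω | Y ω ≤ b} = P {ω | Y' ω ≤ b} := hmeasY (Set.Iic b)
    rw [eS, eA, eB]
    exact hmain
  set R : ℝ := C ^ (α₀ / (2 + α₀)) with hR
  rcases eq_or_lt_of_le hcov with hC0 | hC0
  · -- cov = 0
    have hRz : R = 0 := by
      rw [hR, ← hC0, Real.zero_rpow]
      positivity
    have hgap : (P {ω | X ω ≤ a ∧ Y ω ≤ b}).toReal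
        - (P {ω | X ω ≤ a}).toReal * (P {ω | Y ω ≤ b}).toReal ≤ 0 := by
      refine le_of_forall_pos_le_add fun e he => ?_
      set δ := (e / (2 * C₀)) ^ (α₀⁻¹) with hδdef
      have hδ : 0 < δ := Real.rpow_pos_of_pos (by positivity) _
      have hδpow : δ ^ α₀ = e / (2 * C₀) := by
        rw [hδdef, ← Real.rpow_mul (by positivity), inv_mul_cancel₀ hα₀.ne', Real.rpow_one]
      have := key δ hδ
      rw [← hC0] at this
      have h2 : C₀ * δ ^ α₀ = e / 2 := by
        rw [hδpow]; field_simp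
      rw [h2, zero_div] at this
      linarith
    rw [hRz]
    linarith
  · -- cov > 0
    set δ := C ^ ((2 + α₀)⁻¹) with hδdef
    have hδ : 0 < δ := Real.rpow_pos_of_pos hC0 _
    have h2α : (0:ℝ) < 2 + α₀ := by linarith
    have hδsq : δ ^ (2:ℕ) = C ^ ((2:ℝ) / (2 + α₀)) := by
      rw [hδdef, ← Real.rpow_natCast (C ^ ((2 + α₀)⁻¹)) 2, ← Real.rpow_mul hC0.le]
      norm_num
      rw [inv_mul_eq_div]
    have hApos : 0 < C ^ ((2:ℝ) / (2 + α₀)) := Real.rpow_pos_of_pos hC0 _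
    have hmulR : C ^ ((2:ℝ) / (2 + α₀)) * R = C := by
      rw [hR, ← Real.rpow_add hC0,
        show (2:ℝ) / (2 + α₀) + α₀ / (2 + α₀) = 1 by field_simp, Real.rpow_one]
    have hCdiv : C / δ ^ 2 = R := by
      rw [hδsq, div_eq_iff hApos.ne', mul_comm]
      exact hmulR.symm
    have hδpow : δ ^ α₀ = R := by
      rw [hδdef, ← Real.rpow_mul hC0.le, hR]
      congr 1
      field_simp
    have := key δ hδ
    rw [hCdiv, hδpow] at this
    have hR0 : 0 ≤ R := Real.rpow_nonneg hC0.le _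
    nlinarith
end

section
/- Fix γ ∈ (0, 1) and an integer n ≥ 1, and let ψ : ℝ → ℝ satisfy 0 ≤ ψ ≤ 1, ψ is Lipschitz with constant 1, and ψ(x) = 0 whenever |x| ≥ n + 2. Define σ : ℝ → ℝ by σ(x) = ψ(x)·(|x|^γ · 1{|x| > 1/n} + n^{1−γ}|x| · 1{|x| ≤ 1/n}). Then σ is Lipschitz continuous on ℝ with Lipschitz constant at most n^{1−γ} + (n+2)^γ. -/
/-- `σ(x) = ψ(x)·(|x|^γ · 1{|x| > 1/n} + n^{1−γ}|x| · 1{|x| ≤ 1/n})`. -/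
noncomputable def sigmaApprox (γ : ℝ) (n : ℕ) (ψ : ℝ → ℝ) (x : ℝ) : ℝ :=
  ψ x * (if 1 / (n : ℝ) < |x| then |x| ^ γ else (n : ℝ) ^ (1 - γ) * |x|)

open Real Set

lemma sigmaAux_inv_rpow (γ : ℝ) (n : ℕ) (hn : 1 ≤ n) :
    (1 / (n : ℝ)) ^ (γ - 1) = (n : ℝ) ^ (1 - γ) := by
  have hn0 : (0:ℝ) < n := by exact_mod_cast Nat.pos_of_ne_zero (by omega)
  rw [one_div, Real.inv_rpow hn0.le, ← Real.rpow_neg hn0.le, neg_sub]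

/-- For `b ≥ 1/n`: `b^γ ≤ n^{1-γ} b`. -/
lemma pow_le_lin (γ : ℝ) (hγ : γ ∈ Set.Ioo (0:ℝ) 1) (n : ℕ) (hn : 1 ≤ n)
    {b : ℝ} (hb : 1 / (n:ℝ) ≤ b) : b ^ γ ≤ (n : ℝ) ^ (1 - γ) * b := by
  have hn0 : (0:ℝ) < n := by exact_mod_cast Nat.pos_of_ne_zero (by omega)
  have hb0 : (0:ℝ) < b := lt_of_lt_of_le (by positivity) hb
  have h1 : b ^ (γ - 1) ≤ (1 / (n:ℝ)) ^ (γ - 1) :=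
    Real.rpow_le_rpow_of_nonpos (by positivity) hb (by linarith [hγ.2])
  calc b ^ γ = b ^ (γ - 1) * b := by
        rw [← Real.rpow_add_one hb0.ne' (γ - 1), sub_add_cancel]
    _ ≤ (1 / (n:ℝ)) ^ (γ - 1) * b := mul_le_mul_of_nonneg_right h1 hb0.le
    _ = (n : ℝ) ^ (1 - γ) * b := by rw [sigmaAux_inv_rpow γ n hn]

/-- For `0 ≤ b ≤ 1/n`: `n^{1-γ} b ≤ b^γ`. -/
lemma lin_le_pow (γ : ℝ) (hγ : γ ∈ Set.Ioo (0:ℝ) 1) (n : ℕ) (hn : 1 ≤ n)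
    {b : ℝ} (hb0 : 0 ≤ b) (hb : b ≤ 1 / (n:ℝ)) : (n : ℝ) ^ (1 - γ) * b ≤ b ^ γ := by
  have hn0 : (0:ℝ) < n := by exact_mod_cast Nat.pos_of_ne_zero (by omega)
  rcases eq_or_lt_of_le hb0 with h0 | h0
  · rw [← h0, mul_zero, Real.zero_rpow hγ.1.ne']
  · have key : ((n:ℝ) * b) ^ (1 - γ) ≤ 1 := by
      apply Real.rpow_le_one (by positivity) _ (by linarith [hγ.2])
      calc (n:ℝ) * b ≤ (n:ℝ) * (1 / n) := mul_le_mul_of_nonneg_left hb hn0.le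
        _ = 1 := by field_simp
    calc (n : ℝ) ^ (1 - γ) * b = ((n:ℝ) * b) ^ (1 - γ) * b ^ γ := by
          rw [Real.mul_rpow hn0.le hb0, mul_assoc, ← Real.rpow_add h0 (1-γ) γ,
            show (1:ℝ) - γ + γ = 1 by ring, Real.rpow_one]
      _ ≤ 1 * b ^ γ := mul_le_mul_of_nonneg_right key (Real.rpow_nonneg hb0 γ)
      _ = b ^ γ := one_mul _

lemma sigma_eq_min (γ : ℝ) (hγ : γ ∈ Set.Ioo (0:ℝ) 1) (n : ℕ) (hn : 1 ≤ n)
    (ψ : ℝ → ℝ) (x : ℝ) :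
    sigmaApprox γ n ψ x = ψ x * min (|x| ^ γ) ((n : ℝ) ^ (1 - γ) * |x|) := by
  unfold sigmaApprox
  congr 1
  by_cases h : 1 / (n:ℝ) < |x|
  · rw [if_pos h, eq_comm, min_eq_left (pow_le_lin γ hγ n hn h.le)]
  · push_neg at h
    rw [if_neg (not_lt.mpr h), eq_comm,
      min_eq_right (lin_le_pow γ hγ n hn (abs_nonneg x) h)]

/-- `t ↦ t^γ` is `n^{1-γ}`-Lipschitz on `[1/n, ∞)`. -/
lemma rpow_diff_le (γ : ℝ) (hγ : γ ∈ Set.Ioo (0:ℝ) 1) (n : ℕ) (hn : 1 ≤ n)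
    {a b : ℝ} (ha : 1 / (n:ℝ) ≤ a) (hb : 1 / (n:ℝ) ≤ b) :
    |a ^ γ - b ^ γ| ≤ (n:ℝ) ^ (1 - γ) * |a - b| := by
  have hn0 : (0:ℝ) < n := by exact_mod_cast Nat.pos_of_ne_zero (by omega)
  have hinv : (0:ℝ) < 1 / n := by positivity
  have := Convex.norm_image_sub_le_of_norm_hasDerivWithin_le
    (f := fun t : ℝ => t ^ γ) (f' := fun t : ℝ => γ * t ^ (γ - 1))
    (s := Set.Ici (1 / (n:ℝ))) (C := (n:ℝ) ^ (1 - γ))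
    (fun x hx => (Real.hasDerivAt_rpow_const
      (Or.inl (ne_of_gt (lt_of_lt_of_le hinv hx)))).hasDerivWithinAt)
    (fun x hx => by
      have hx0 : (0:ℝ) < x := lt_of_lt_of_le hinv hx
      have h1 : x ^ (γ - 1) ≤ (1 / (n:ℝ)) ^ (γ - 1) :=
        Real.rpow_le_rpow_of_nonpos hinv hx (by linarith [hγ.2])
      have h2 : (0:ℝ) ≤ x ^ (γ - 1) := Real.rpow_nonneg hx0.le _
      rw [Real.norm_eq_abs, abs_of_nonneg (mul_nonneg hγ.1.le h2)]
      calc γ * x ^ (γ - 1) ≤ 1 * ((1 / (n:ℝ)) ^ (γ - 1)) :=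
            mul_le_mul hγ.2.le h1 h2 one_pos.le
        _ = (n:ℝ) ^ (1 - γ) := by rw [one_mul, sigmaAux_inv_rpow γ n hn])
    (convex_Ici _) hb ha
  simpa [Real.norm_eq_abs, abs_sub_comm] using this

/-- The core nonlinearity `g x = min (|x|^γ) (n^{1-γ}|x|)` is `n^{1-γ}`-Lipschitz. -/
lemma g_lip (γ : ℝ) (hγ : γ ∈ Set.Ioo (0:ℝ) 1) (n : ℕ) (hn : 1 ≤ n) (x y : ℝ) :
    |min (|x| ^ γ) ((n : ℝ) ^ (1 - γ) * |x|) - min (|y| ^ γ) ((n : ℝ) ^ (1 - γ) * |y|)|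
      ≤ (n:ℝ) ^ (1 - γ) * |x - y| := by
  have hn0 : (0:ℝ) < n := by exact_mod_cast Nat.pos_of_ne_zero (by omega)
  have hK : (0:ℝ) ≤ (n:ℝ) ^ (1 - γ) := Real.rpow_nonneg hn0.le _
  set K := (n:ℝ) ^ (1 - γ) with hKdef
  have habs : ∀ a b : ℝ, 0 ≤ b → b ≤ a →
      min (a ^ γ) (K * a) - min (b ^ γ) (K * b) ≤ K * (a - b) := by
    intro a b hb0 hba
    by_cases hb : 1 / (n:ℝ) ≤ b
    · have ha : 1 / (n:ℝ) ≤ a := le_trans hb hba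
      rw [min_eq_left (pow_le_lin γ hγ n hn ha), min_eq_left (pow_le_lin γ hγ n hn hb)]
      calc a ^ γ - b ^ γ ≤ |a ^ γ - b ^ γ| := le_abs_self _
        _ ≤ K * |a - b| := rpow_diff_le γ hγ n hn ha hb
        _ = K * (a - b) := by rw [abs_of_nonneg (by linarith)]
    · push_neg at hb
      by_cases ha : a ≤ 1 / (n:ℝ)
      · rw [min_eq_right (lin_le_pow γ hγ n hn hb0 hb.le),
          min_eq_right (lin_le_pow γ hγ n hn (le_trans hb0 hba) ha)]
        nlinarith
      · push_neg at ha
        have hc0 : (0:ℝ) ≤ 1 / (n:ℝ) := by positivity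
        rw [min_eq_left (pow_le_lin γ hγ n hn ha.le),
          min_eq_right (lin_le_pow γ hγ n hn hb0 hb.le)]
        have h1 : a ^ γ - (1/(n:ℝ)) ^ γ ≤ K * (a - 1/(n:ℝ)) := by
          calc a ^ γ - (1/(n:ℝ)) ^ γ ≤ |a ^ γ - (1/(n:ℝ)) ^ γ| := le_abs_self _
            _ ≤ K * |a - 1/(n:ℝ)| := rpow_diff_le γ hγ n hn ha.le le_rfl
            _ = K * (a - 1/(n:ℝ)) := by rw [abs_of_nonneg (by linarith)]
        have h2 : (1/(n:ℝ)) ^ γ = K * (1/(n:ℝ)) := by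
          have hle := pow_le_lin γ hγ n hn (le_refl (1/(n:ℝ)))
          have hge := lin_le_pow γ hγ n hn hc0 (le_refl (1/(n:ℝ)))
          linarith
        nlinarith
  have hmono : ∀ a b : ℝ, 0 ≤ b → b ≤ a →
      min (b ^ γ) (K * b) ≤ min (a ^ γ) (K * a) :=
    fun a b hb0 hba => min_le_min (Real.rpow_le_rpow hb0 hba hγ.1.le)
      (mul_le_mul_of_nonneg_left hba hK)
  have habs2 : ∀ a b : ℝ, 0 ≤ b → b ≤ a →
      |min (a ^ γ) (K * a) - min (b ^ γ) (K * b)| ≤ K * (a - b) := by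
    intro a b hb0 hba
    rw [abs_of_nonneg (by linarith [hmono a b hb0 hba])]
    exact habs a b hb0 hba
  have hxy : |(|x| - |y|)| ≤ |x - y| := abs_abs_sub_abs_le_abs_sub x y
  rcases le_total (|y|) (|x|) with h | h
  · calc |min (|x| ^ γ) (K * |x|) - min (|y| ^ γ) (K * |y|)|
        ≤ K * (|x| - |y|) := habs2 _ _ (abs_nonneg y) h
      _ ≤ K * |x - y| := by
          apply mul_le_mul_of_nonneg_left _ hK
          exact le_trans (le_abs_self _) hxy
  · rw [abs_sub_comm]
    have hxy' : |(|y| - |x|)| ≤ |x - y| := by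
      rw [abs_sub_comm] at hxy ⊢
      simpa [abs_sub_comm] using abs_abs_sub_abs_le_abs_sub y x
    calc |min (|y| ^ γ) (K * |y|) - min (|x| ^ γ) (K * |x|)|
        ≤ K * (|y| - |x|) := habs2 _ _ (abs_nonneg x) h
      _ ≤ K * |x - y| := by
          apply mul_le_mul_of_nonneg_left _ hK
          exact le_trans (le_abs_self _) hxy'

/-- If `0 ≤ ψ ≤ 1`, `ψ` is `1`-Lipschitz and `ψ` vanishes outside `[-(n+2), n+2]`, then `σ`
is Lipschitz with constant at most `n^{1-γ} + (n+2)^γ`. -/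
theorem stmt11 (γ : ℝ) (hγ : γ ∈ Set.Ioo (0:ℝ) 1) (n : ℕ) (hn : 1 ≤ n)
    (ψ : ℝ → ℝ) (hψ : ∀ x, 0 ≤ ψ x ∧ ψ x ≤ 1) (hψLip : LipschitzWith 1 ψ)
    (hψ0 : ∀ x : ℝ, (n : ℝ) + 2 ≤ |x| → ψ x = 0) :
    LipschitzWith (((n : ℝ) ^ (1 - γ) + ((n : ℝ) + 2) ^ γ).toNNReal)
      (sigmaApprox γ n ψ) := by
  have hn0 : (0:ℝ) < n := by exact_mod_cast Nat.pos_of_ne_zero (by omega)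
  set K := (n:ℝ) ^ (1 - γ) with hKdef
  set M := ((n:ℝ) + 2) ^ γ with hMdef
  have hK : (0:ℝ) ≤ K := Real.rpow_nonneg hn0.le _
  have hM : (0:ℝ) ≤ M := Real.rpow_nonneg (by linarith) _
  set g : ℝ → ℝ := fun x => min (|x| ^ γ) (K * |x|) with hgdef
  have hg0 : ∀ x, 0 ≤ g x := fun x =>
    le_min (Real.rpow_nonneg (abs_nonneg x) γ) (by positivity)
  have hgM : ∀ x, ψ x ≠ 0 → g x ≤ M := by
    intro x hx
    have hxb : |x| ≤ (n:ℝ) + 2 := by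
      by_contra h
      exact hx (hψ0 x (le_of_lt (not_le.mp h)))
    calc g x ≤ |x| ^ γ := min_le_left _ _
      _ ≤ M := Real.rpow_le_rpow (abs_nonneg x) hxb hγ.1.le
  have hglip : ∀ x y, |g x - g y| ≤ K * |x - y| := fun x y => g_lip γ hγ n hn x y
  have hψd : ∀ x y, |ψ x - ψ y| ≤ |x - y| := by
    intro x y
    have := hψLip.dist_le_mul x y
    simpa [Real.dist_eq] using this
  have key : ∀ x y, |sigmaApprox γ n ψ x - sigmaApprox γ n ψ y| ≤ (K + M) * |x - y| := by
    have main : ∀ x y, ψ x ≠ 0 →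
        |sigmaApprox γ n ψ x - sigmaApprox γ n ψ y| ≤ (K + M) * |x - y| := by
      intro x y hx
      rw [sigma_eq_min γ hγ n hn ψ x, sigma_eq_min γ hγ n hn ψ y]
      have hdecomp : ψ x * g x - ψ y * g y = (ψ x - ψ y) * g x + ψ y * (g x - g y) := by
        ring
      calc |ψ x * g x - ψ y * g y|
          = |(ψ x - ψ y) * g x + ψ y * (g x - g y)| := by rw [hdecomp]
        _ ≤ |(ψ x - ψ y) * g x| + |ψ y * (g x - g y)| := abs_add_le _ _
        _ = |ψ x - ψ y| * g x + ψ y * |g x - g y| := by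
            rw [abs_mul, abs_mul, abs_of_nonneg (hg0 x), abs_of_nonneg (hψ y).1]
        _ ≤ |x - y| * M + 1 * (K * |x - y|) := by
            apply add_le_add
            · exact mul_le_mul (hψd x y) (hgM x hx) (hg0 x) (abs_nonneg _)
            · exact mul_le_mul (hψ y).2 (hglip x y) (abs_nonneg _) one_pos.le
        _ = (K + M) * |x - y| := by ring
    intro x y
    by_cases hx : ψ x = 0
    · by_cases hy : ψ y = 0
      · rw [sigma_eq_min γ hγ n hn ψ x, sigma_eq_min γ hγ n hn ψ y, hx, hy]
        simp
        positivity
      · rw [abs_sub_comm]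
        have := main y x hy
        rwa [abs_sub_comm y x] at this
    · exact main x y hx
  apply LipschitzWith.of_dist_le_mul
  intro x y
  rw [Real.dist_eq, Real.dist_eq, Real.coe_toNNReal _ (by positivity)]
  exact key x y
end

section
/- Fix γ ∈ (0, 1) and an integer n ≥ 1, and let ψ : ℝ → ℝ satisfy 0 ≤ ψ ≤ 1. Define σ : ℝ → ℝ by σ(x) = ψ(x)·(|x|^γ · 1{|x| > 1/n} + n^{1−γ}|x| · 1{|x| ≤ 1/n}). Then for all x ∈ ℝ, |σ(x) − |x|^γ| ≤ (1 − ψ(x))·(2 + |x|) + n^{−γ}·(γ^{γ/(1−γ)} − γ^{1/(1−γ)}). -/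
open Real

-- `sigmaApprox γ n ψ x` is definitionally `ψ x * tamedRpow γ n |x|`.
noncomputable def tamedRpow (γ a t : ℝ) : ℝ :=
  if 1 / a < t then t ^ γ else a ^ (1 - γ) * t

lemma rpow_le_one_add {γ t : ℝ} (hγ0 : 0 ≤ γ) (hγ1 : γ ≤ 1) (ht : 0 ≤ t) : t ^ γ ≤ 1 + t := by
  have h := geom_mean_le_arith_mean2_weighted hγ0 (sub_nonneg.2 hγ1) ht zero_le_one
    (add_sub_cancel γ 1)
  rw [one_rpow, mul_one, mul_one] at h
  nlinarith

lemma rpow_sub_self_le {γ s : ℝ} (hγ0 : 0 < γ) (hγ1 : γ < 1) (hs : 0 ≤ s) :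
    s ^ γ - s ≤ γ ^ (γ / (1 - γ)) - γ ^ (1 / (1 - γ)) := by
  set c := γ ^ (1 / (1 - γ))
  have hc : 0 < c := rpow_pos_of_pos hγ0 _
  have hc_pow : c ^ (1 - γ) = γ := by
    simp only [c, one_div]
    exact rpow_inv_rpow hγ0.le (by linarith)
  have hc_gamma : c ^ γ = γ ^ (γ / (1 - γ)) := by
    rw [← rpow_mul hγ0.le]; congr 1; ring
  have hc_eq : c = γ * c ^ γ := by
    calc c = c ^ ((1 - γ) + γ) := by rw [sub_add_cancel, rpow_one]
      _ = γ * c ^ γ := by rw [rpow_add hc, hc_pow]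
  -- `c^{1-γ} = γ` turns weighted AM-GM `s^γ c^{1-γ} ≤ γ s + (1-γ) c` into the claim
  have amgm := geom_mean_le_arith_mean2_weighted hγ0.le (sub_nonneg.2 hγ1.le) hs hc.le
    (add_sub_cancel γ 1)
  rw [hc_pow] at amgm
  rw [← hc_gamma]
  have key : γ * (s ^ γ - s) ≤ γ * (c ^ γ - c) := by linear_combination amgm + hc_eq
  exact le_of_mul_le_mul_left key hγ0

lemma rpow_sub_mul_le {γ a t : ℝ} (hγ0 : 0 < γ) (hγ1 : γ < 1) (ha : 0 < a) (ht : 0 ≤ t) :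
    t ^ γ - a ^ (1 - γ) * t ≤ a ^ (-γ) * (γ ^ (γ / (1 - γ)) - γ ^ (1 / (1 - γ))) := by
  calc t ^ γ - a ^ (1 - γ) * t = a ^ (-γ) * ((a * t) ^ γ - a * t) := by
        rw [mul_rpow ha.le ht, mul_sub, ← mul_assoc, ← rpow_add ha, neg_add_cancel, rpow_zero,
          one_mul, ← mul_assoc, ← rpow_add_one ha.ne', neg_add_eq_sub]
    _ ≤ _ := mul_le_mul_of_nonneg_left (rpow_sub_self_le hγ0 hγ1 (by positivity))
        (rpow_nonneg ha.le _)

section tamedRpow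

variable {γ a t : ℝ}

lemma tamedRpow_nonneg (ha : 0 ≤ a) (ht : 0 ≤ t) : 0 ≤ tamedRpow γ a t := by
  unfold tamedRpow
  split_ifs
  · exact rpow_nonneg ht γ
  · exact mul_nonneg (rpow_nonneg ha _) ht

lemma tamedRpow_le_rpow (hγ1 : γ ≤ 1) (ha : 0 < a) (ht : 0 ≤ t) : tamedRpow γ a t ≤ t ^ γ := by
  unfold tamedRpow
  split_ifs with h
  · exact le_rfl
  have hat : a * t ≤ 1 := by
    rw [not_lt, le_div_iff₀ ha] at h
    linarith
  calc a ^ (1 - γ) * t = (a * t) ^ (1 - γ) * t ^ γ := by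
        rw [mul_rpow ha.le ht, mul_assoc, ← rpow_add' ht (by simp), sub_add_cancel, rpow_one]
    _ ≤ 1 * t ^ γ := by
        gcongr
        exact rpow_le_one (by positivity) hat (by linarith)
    _ = t ^ γ := one_mul _

lemma rpow_sub_tamedRpow_le (hγ0 : 0 < γ) (hγ1 : γ < 1) (ha : 0 < a) (ht : 0 ≤ t) :
    t ^ γ - tamedRpow γ a t ≤ a ^ (-γ) * (γ ^ (γ / (1 - γ)) - γ ^ (1 / (1 - γ))) := by
  unfold tamedRpow
  split_ifs
  · simpa [zero_rpow hγ0.ne'] using rpow_sub_mul_le hγ0 hγ1 ha le_rfl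
  · exact rpow_sub_mul_le hγ0 hγ1 ha ht

end tamedRpow

lemma abs_mul_sub_le {p b y M K : ℝ} (hp1 : p ≤ 1) (hb0 : 0 ≤ b) (hby : b ≤ y)
    (hyM : y ≤ M) (hyb : y - b ≤ K) : |p * b - y| ≤ (1 - p) * M + K := by
  have hpb : p * b ≤ y := by nlinarith
  rw [abs_of_nonpos (sub_nonpos.2 hpb)]
  nlinarith

/-- If `0 ≤ ψ ≤ 1`, then for all `x`,
`|σ(x) − |x|^γ| ≤ (1 − ψ(x))(2 + |x|) + n^{−γ}(γ^{γ/(1−γ)} − γ^{1/(1−γ)})`. -/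
theorem stmt13 (γ : ℝ) (hγ : γ ∈ Set.Ioo (0:ℝ) 1) (n : ℕ) (hn : 1 ≤ n)
    (ψ : ℝ → ℝ) (hψ : ∀ x, 0 ≤ ψ x ∧ ψ x ≤ 1) :
    ∀ x : ℝ, |sigmaApprox γ n ψ x - |x| ^ γ| ≤
      (1 - ψ x) * (2 + |x|) +
        (n : ℝ) ^ (-γ) * (γ ^ (γ / (1 - γ)) - γ ^ (1 / (1 - γ))) := by
  intro x
  obtain ⟨hγ0, hγ1⟩ := hγ
  have hn0 : (0 : ℝ) < n := by exact_mod_cast hn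
  have hx := abs_nonneg x
  have hpow : |x| ^ γ ≤ 2 + |x| := by linarith [rpow_le_one_add hγ0.le hγ1.le hx]
  exact abs_mul_sub_le (hψ x).2 (tamedRpow_nonneg hn0.le hx)
    (tamedRpow_le_rpow hγ1.le hn0 hx) hpow (rpow_sub_tamedRpow_le hγ0 hγ1 hn0 hx)
end

section
/- Let a ∈ (0, 1) and c ∈ (0, a) be real numbers. Then the series ∑_{N=1}^∞ (1 − N^{−c})^{⌊N^a⌋} converges; moreover for every integer N ≥ 1, (1 − N^{−c})^{⌊N^a⌋} ≤ exp(−⌊N^a⌋·N^{−c}). -/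
lemma aux15 (ε : ℝ) (hε : 0 < ε) : ∃ C > 0, ∀ x : ℝ, 1 ≤ x →
    Real.exp (-(x ^ ε) / 2) ≤ C / x ^ 2 := by
  obtain ⟨m, hm⟩ : ∃ m : ℕ, 2 ≤ (m : ℝ) * ε := by
    refine ⟨⌈2/ε⌉₊, ?_⟩
    exact (div_le_iff₀ hε).mp (Nat.le_ceil (2/ε))
  refine ⟨(m.factorial : ℝ) * 2 ^ m, by positivity, fun x hx => ?_⟩
  have hx0 : (0:ℝ) < x := lt_of_lt_of_le one_pos hx
  have ht : (0:ℝ) < x ^ ε := Real.rpow_pos_of_pos hx0 ε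
  have h1 : (x ^ ε / 2) ^ m / m.factorial ≤ Real.exp (x ^ ε / 2) :=
    Real.pow_div_factorial_le_exp _ (by positivity) m
  have h2 : (x:ℝ) ^ (2:ℕ) ≤ (x ^ ε) ^ m := by
    rw [← Real.rpow_natCast (x ^ ε) m, ← Real.rpow_natCast x 2,
      ← Real.rpow_mul hx0.le]
    exact Real.rpow_le_rpow_of_exponent_le hx (by push_cast; linarith [hm])
  have hpm : (0:ℝ) < (x ^ ε / 2) ^ m / m.factorial := by positivity
  have key : Real.exp (-(x ^ ε) / 2) = (Real.exp (x ^ ε / 2))⁻¹ := by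
    rw [← Real.exp_neg]; ring_nf
  rw [key]
  have h3 : (Real.exp (x ^ ε / 2))⁻¹ ≤ ((x ^ ε / 2) ^ m / m.factorial)⁻¹ :=
    inv_anti₀ hpm h1
  have h4 : ((x ^ ε / 2) ^ m / m.factorial)⁻¹ = m.factorial * 2 ^ m / (x ^ ε) ^ m := by
    rw [div_pow]
    field_simp
  refine h3.trans ?_
  rw [h4]
  gcongr

lemma aux15b (x : ℝ) (_hx0 : 0 ≤ x) (hx1 : x ≤ 1) (k : ℕ) :
    (1 - x) ^ k ≤ Real.exp (-(k:ℝ) * x) := by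
  have h1 : 1 - x ≤ Real.exp (-x) := by linarith [Real.add_one_le_exp (-x)]
  calc (1 - x) ^ k ≤ (Real.exp (-x)) ^ k := pow_le_pow_left₀ (by linarith) h1 k
  _ = Real.exp (-(k:ℝ) * x) := by rw [← Real.exp_nat_mul]; ring_nf

/-- For `a ∈ (0,1)` and `c ∈ (0,a)`, the series `∑_{N≥1} (1 − N^{−c})^{⌊N^a⌋}` converges,
and for every `N ≥ 1`, `(1 − N^{−c})^{⌊N^a⌋} ≤ exp(−⌊N^a⌋ N^{−c})`. -/
theorem stmt15 (a c : ℝ) (ha : a ∈ Set.Ioo (0:ℝ) 1) (hc : c ∈ Set.Ioo (0:ℝ) a) :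
    Summable (fun N : ℕ =>
      (1 - ((N : ℝ) + 1) ^ (-c)) ^ ⌊((N : ℝ) + 1) ^ a⌋₊) ∧
    ∀ N : ℕ, 1 ≤ N →
      (1 - (N : ℝ) ^ (-c)) ^ ⌊(N : ℝ) ^ a⌋₊ ≤
        Real.exp (-(⌊(N : ℝ) ^ a⌋₊ : ℝ) * (N : ℝ) ^ (-c)) := by
  obtain ⟨ha0, ha1⟩ := ha
  obtain ⟨hc0, hca⟩ := hc
  -- generic pointwise bound
  have ptwise : ∀ x : ℝ, 1 ≤ x →
      (1 - x ^ (-c)) ^ ⌊x ^ a⌋₊ ≤ Real.exp (-(⌊x ^ a⌋₊ : ℝ) * x ^ (-c)) := by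
    intro x hx
    have hx0 : (0:ℝ) < x := lt_of_lt_of_le one_pos hx
    have h0 : 0 ≤ x ^ (-c) := Real.rpow_nonneg hx0.le _
    have h1 : x ^ (-c) ≤ 1 := Real.rpow_le_one_of_one_le_of_nonpos hx (by linarith)
    exact aux15b _ h0 h1 _
  constructor
  · -- summability
    obtain ⟨C, hC, hCle⟩ := aux15 (a - c) (by linarith)
    have hsum : Summable (fun N : ℕ => C / ((N:ℝ) + 1) ^ 2) := by
      have base : Summable (fun n : ℕ => C * (1 / (n:ℝ) ^ 2)) :=
        (Real.summable_one_div_nat_pow.mpr one_lt_two).mul_left C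
      have := (summable_nat_add_iff 1).mpr base
      refine this.congr fun n => ?_
      push_cast
      ring
    refine Summable.of_nonneg_of_le (fun N => ?_) (fun N => ?_) hsum
    · have hx : (1:ℝ) ≤ (N:ℝ) + 1 := by
        have := Nat.cast_nonneg (α := ℝ) N; linarith
      have h1 : ((N:ℝ) + 1) ^ (-c) ≤ 1 :=
        Real.rpow_le_one_of_one_le_of_nonpos hx (by linarith)
      exact pow_nonneg (by linarith) _
    · set x : ℝ := (N:ℝ) + 1 with hxdef
      have hx : (1:ℝ) ≤ x := by
        have := Nat.cast_nonneg (α := ℝ) N; simp only [hxdef]; linarith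
      have hx0 : (0:ℝ) < x := lt_of_lt_of_le one_pos hx
      have hta : (1:ℝ) ≤ x ^ a := Real.one_le_rpow hx ha0.le
      have hfloor : x ^ a / 2 ≤ (⌊x ^ a⌋₊ : ℝ) := by
        rcases le_or_gt (x ^ a) 2 with h | h
        · have : (1:ℕ) ≤ ⌊x ^ a⌋₊ := Nat.le_floor (by exact_mod_cast hta)
          have : (1:ℝ) ≤ (⌊x ^ a⌋₊ : ℝ) := by exact_mod_cast this
          linarith
        · have := Nat.lt_floor_add_one (x ^ a)
          linarith
      have hyc : (0:ℝ) < x ^ (-c) := Real.rpow_pos_of_pos hx0 _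
      have step2 : Real.exp (-(⌊x ^ a⌋₊ : ℝ) * x ^ (-c)) ≤
          Real.exp (-(x ^ (a - c)) / 2) := by
        apply Real.exp_le_exp.mpr
        have : x ^ a * x ^ (-c) = x ^ (a - c) := by
          rw [← Real.rpow_add hx0]; ring_nf
        nlinarith [hfloor, hyc]
      calc (1 - x ^ (-c)) ^ ⌊x ^ a⌋₊
          ≤ Real.exp (-(⌊x ^ a⌋₊ : ℝ) * x ^ (-c)) := ptwise x hx
        _ ≤ Real.exp (-(x ^ (a - c)) / 2) := step2
        _ ≤ C / x ^ 2 := hCle x hx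
  · intro N hN
    exact ptwise N (by exact_mod_cast hN)
end
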